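/- Let T₀(t) be a Markovian (positivity-preserving, sub-Markov) semigroup on functions over Γ_X and suppose a semigroup T₁(t) on vector-valued fields satisfies the pointwise domination ‖T₁(t)V(γ)‖_γ ≤ e^{tC} T₀(t)‖V(·)‖_·(γ) for all γ. If T₀(t) extends to a strongly continuous contraction semigroup on L²(Γ_X; π_σ), then T₁(t) extends to a strongly continuous semigroup on the L²-space of square-integrable fields with ‖T₁(t)‖_{L²→L²} ≤ e^{tC}. -/

import Mathlib

open MeasureTheory

theorem memLp_and_eLpNorm_le_of_ae_norm_le_mul {α E : Type*} [MeasurableSpace α] {μ : Measure α}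
    [NormedAddCommGroup E] {p : ENNReal} {f : α → E} {g : α → ℝ} {c : ℝ}
    (hg : MemLp g p μ) (hf : AEStronglyMeasurable f μ) (hc : 0 ≤ c)
    (hfg : ∀ᵐ x ∂μ, ‖f x‖ ≤ c * g x) :
    MemLp f p μ ∧ eLpNorm f p μ ≤ ENNReal.ofReal c * eLpNorm g p μ := by
  have hfg' : ∀ᵐ x ∂μ, ‖f x‖ ≤ c * ‖g x‖ :=
    hfg.mono fun x hx => hx.trans (mul_le_mul_of_nonneg_left (le_abs_self _) hc)
  exact ⟨hg.of_le_mul hf hfg', eLpNorm_le_mul_eLpNorm_of_ae_le_mul hfg' p⟩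

theorem domination_implies_L2_bound_general {Γ : Type*} [MeasurableSpace Γ]
    (π : Measure Γ)
    {H : Type*} [NormedAddCommGroup H]
    (T₀ : (Γ → ℝ) → (Γ → ℝ)) (t C : ℝ)
    (hcontr : ∀ f : Γ → ℝ, MemLp f 2 π →
      MemLp (T₀ f) 2 π ∧ eLpNorm (T₀ f) 2 π ≤ eLpNorm f 2 π)
    (V : Γ → H) (hV : MemLp V 2 π)
    (T₁V : Γ → H) (hmeas : AEStronglyMeasurable T₁V π)
    (hdom : ∀ γ, ‖T₁V γ‖ ≤ Real.exp (t * C) * T₀ (fun γ' => ‖V γ'‖) γ) :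
    MemLp T₁V 2 π ∧
      eLpNorm T₁V 2 π ≤ ENNReal.ofReal (Real.exp (t * C)) * eLpNorm V 2 π := by
  obtain ⟨hT₀V, hT₀V_le⟩ := hcontr _ hV.norm
  obtain ⟨hmem, hle⟩ :=
    memLp_and_eLpNorm_le_of_ae_norm_le_mul hT₀V hmeas (Real.exp_pos _).le (ae_of_all _ hdom)
  refine ⟨hmem, hle.trans ?_⟩
  rw [← eLpNorm_norm V]
  gcongr

/-- If `T₀` is a positivity-preserving (sub-Markov) semigroup (at time `t`) on
functions over the configuration space which is an `L²(π_σ)`-contraction, and the action `T₁V`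
of a semigroup on fields satisfies the pointwise domination
`‖T₁(t)V(γ)‖_γ ≤ e^{tC} (T₀(t)‖V(·)‖)(γ)`, then `T₁(t)V` is square integrable and
`‖T₁(t)V‖_{L²} ≤ e^{tC} ‖V‖_{L²}`; i.e. `T₁(t)` extends to `L²` with operator norm `≤ e^{tC}`. -/
theorem domination_implies_L2_bound {Γ : Type*} [MeasurableSpace Γ]
    (π : Measure Γ) [IsProbabilityMeasure π]
    {H : Type*} [NormedAddCommGroup H] [InnerProductSpace ℝ H]
    (T₀ : (Γ → ℝ) → (Γ → ℝ)) (t C : ℝ) (ht : 0 ≤ t)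
    (hpos : ∀ f : Γ → ℝ, (∀ γ, 0 ≤ f γ) → ∀ γ, 0 ≤ T₀ f γ)
    (hcontr : ∀ f : Γ → ℝ, MemLp f 2 π →
      MemLp (T₀ f) 2 π ∧ eLpNorm (T₀ f) 2 π ≤ eLpNorm f 2 π)
    (V : Γ → H) (hV : MemLp V 2 π)
    (T₁V : Γ → H) (hmeas : AEStronglyMeasurable T₁V π)
    (hdom : ∀ γ, ‖T₁V γ‖ ≤ Real.exp (t * C) * T₀ (fun γ' => ‖V γ'‖) γ) :
    MemLp T₁V 2 π ∧
      eLpNorm T₁V 2 π ≤ ENNReal.ofReal (Real.exp (t * C)) * eLpNorm V 2 π :=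
  domination_implies_L2_bound_general π T₀ t C hcontr V hV T₁V hmeas hdom
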